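/- arXiv:1910.13237 — 2 statements merged into one kernel-verified Lean document; each statement's English description precedes it below -/
import Mathlib

section
/- A capacity-constrained choice rule is lexicographic if and only if it satisfies capacity-filling, gross substitutes, monotonicity, and the capacity-wise weak axiom of revealed preference (CWARP). -/
open Finset

variable {α : Type*} [Fintype α] [DecidableEq α]

/-- The set of rejected alternatives `R(S,q) = S \ C(S,q)`. -/
def Rej (C : Finset α → ℕ → Finset α) (S : Finset α) (q : ℕ) : Finset α := S \ C S q

/-- A capacity-constrained choice rule chooses a subset of `S` of cardinality at most `q`. -/
def ValidRule (C : Finset α → ℕ → Finset α) : Prop :=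
  ∀ S : Finset α, ∀ q : ℕ, S.Nonempty → 1 ≤ q → q ≤ Fintype.card α →
    C S q ⊆ S ∧ (C S q).card ≤ q

/-- Capacity-filling: `|C(S,q)| = min {|S|, q}`. -/
def CapacityFilling (C : Finset α → ℕ → Finset α) : Prop :=
  ∀ S : Finset α, ∀ q : ℕ, S.Nonempty → 1 ≤ q → q ≤ Fintype.card α →
    (C S q).card = min S.card q

/-- Monotonicity: `C(S,q) ⊆ C(S,q+1)`. -/
def ChoiceMonotone (C : Finset α → ℕ → Finset α) : Prop :=
  ∀ S : Finset α, ∀ q : ℕ, S.Nonempty → 1 ≤ q → q < Fintype.card α →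
    C S q ⊆ C S (q + 1)

/-- Gross substitutes: if `a ∈ C(S,q)` then `a ∈ C(S \ {b}, q)` for `b ≠ a`. -/
def GrossSubstitutes (C : Finset α → ℕ → Finset α) : Prop :=
  ∀ S : Finset α, ∀ q : ℕ, ∀ a b : α, S.Nonempty → 1 ≤ q → q ≤ Fintype.card α →
    a ∈ S → b ∈ S → a ≠ b → a ∈ C S q → a ∈ C (S.erase b) q

/-- Irrelevance of accepted alternatives. -/
def IrrelevanceOfAcceptedAlternatives (C : Finset α → ℕ → Finset α) : Prop :=
  ∀ S S' : Finset α, ∀ q : ℕ, S.Nonempty → S'.Nonempty → 1 ≤ q → q < Fintype.card α →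
    Rej C S q = Rej C S' q →
    C S (q + 1) ∩ Rej C S q = C S' (q + 1) ∩ Rej C S' q

/-- `a` is revealed preferred to `b` at capacity `q`. -/
def RevealedPref (C : Finset α → ℕ → Finset α) (q : ℕ) (a b : α) : Prop :=
  ∃ S : Finset α, S.Nonempty ∧ a ∉ C S (q - 1) ∧ b ∉ C S (q - 1) ∧
    a ∈ C S q ∧ b ∈ Rej C S q

/-- Capacity-wise weak axiom of revealed preference. -/
def CWARP (C : Finset α → ℕ → Finset α) : Prop :=
  ∀ q : ℕ, 1 < q → q ≤ Fintype.card α →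
    ∀ a b : α, RevealedPref C q a b → ¬ RevealedPref C q b a

/-- Lexicographic choice: iteratively pick, for `i = 1, …, q`, the `π i`-maximal
remaining alternative of `S`, stopping when none remain. -/
def lexChoice (π : ℕ → LinearOrder α) (S : Finset α) : ℕ → Finset α
  | 0 => ∅
  | q + 1 =>
      let T := lexChoice π S q
      if h : (S \ T).Nonempty then insert (@Finset.max' α (π q) (S \ T) h) T else T

/-- `C` is (capacity-constrained) lexicographic for the priority profile `π`. -/
def IsLexFor (C : Finset α → ℕ → Finset α) (π : ℕ → LinearOrder α) : Prop :=
  ∀ S : Finset α, ∀ q : ℕ, S.Nonempty → 1 ≤ q → q ≤ Fintype.card α →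
    C S q = lexChoice π S q

/-- `C` is (capacity-constrained) lexicographic. -/
def IsLex (C : Finset α → ℕ → Finset α) : Prop :=
  ∃ π : ℕ → LinearOrder α, IsLexFor C π

/-! ### Auxiliary lemmas -/

section Aux

/-- Any irreflexive transitive relation extends to a linear order. -/
lemma exists_linext (r : α → α → Prop) (hirr : ∀ a, ¬ r a a)
    (htr : ∀ ⦃a b c⦄, r a b → r b c → r a c) :
    ∃ L : LinearOrder α, ∀ a b, r a b → L.lt a b := by
  classical
  letI hpo : IsPartialOrder α (fun a b => r a b ∨ a = b) :=
    { refl := fun a => Or.inr rfl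
      trans := by
        rintro a b c (h | rfl) (h' | rfl)
        · exact Or.inl (htr h h')
        · exact Or.inl h
        · exact Or.inl h'
        · exact Or.inr rfl
      antisymm := by
        intro a b hab hba
        rcases hab with h | rfl
        · rcases hba with h' | rfl
          · exact absurd (htr h h') (hirr a)
          · rfl
        · rfl }
  obtain ⟨s, hlin, hext⟩ := extend_partialOrder (fun a b => r a b ∨ a = b)
  haveI := hlin
  letI hsto : IsStrictTotalOrder α (fun a b => s a b ∧ a ≠ b) :=
    { trichotomous := fun a b => by
        by_cases hab : a = b
        · exact fun _ _ => hab
        · rcases total_of s a b with h | h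
          · exact fun h1 _ => (h1 ⟨h, hab⟩).elim
          · exact fun _ h2 => (h2 ⟨h, Ne.symm hab⟩).elim
      irrefl := fun a h => h.2 rfl
      trans := fun a b c h h' =>
        ⟨_root_.trans h.1 h'.1, fun e => h.2 (antisymm h.1 (e ▸ h'.1))⟩ }
  letI : DecidableRel (fun a b : α => s a b ∧ a ≠ b) := fun a b => Classical.dec _
  refine ⟨linearOrderOfSTO (fun a b => s a b ∧ a ≠ b), fun a b h => ?_⟩
  exact ⟨hext _ _ (Or.inl h), fun e => hirr a (e ▸ h)⟩

lemma max'_eq_of_forall_lt (L : LinearOrder α) {S : Finset α} (h : S.Nonempty) {m : α}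
    (hm : m ∈ S) (hall : ∀ x ∈ S, x ≠ m → L.lt x m) :
    @Finset.max' α L S h = m := by
  letI := L
  have h1 : S.max' h ≤ m := by
    rcases eq_or_ne (S.max' h) m with he | he
    · exact le_of_eq he
    · exact le_of_lt (hall _ (S.max'_mem h) he)
  exact le_antisymm h1 (S.le_max' m hm)

end Aux

/-! ### Properties of `lexChoice` -/

section Lex

variable (π : ℕ → LinearOrder α) (S : Finset α)

lemma lexChoice_subset : ∀ q, lexChoice π S q ⊆ S := by
  intro q
  induction q with
  | zero => simp [lexChoice]
  | succ p ih =>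
      simp only [lexChoice]
      split_ifs with h
      · intro x hx
        rcases mem_insert.1 hx with rfl | hx
        · exact (mem_sdiff.1 (@Finset.max'_mem α (π p) _ h)).1
        · exact ih hx
      · exact ih

lemma lexChoice_mono : ∀ q, lexChoice π S q ⊆ lexChoice π S (q + 1) := by
  intro q
  simp only [lexChoice]
  split_ifs with h
  · exact subset_insert _ _
  · exact subset_rfl

lemma lexChoice_card : ∀ q, (lexChoice π S q).card = min S.card q := by
  intro q
  induction q with
  | zero => simp [lexChoice]
  | succ p ih =>
      simp only [lexChoice]
      split_ifs with h
      · have hmm := @Finset.max'_mem α (π p) _ h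
        rw [mem_sdiff] at hmm
        rw [card_insert_of_notMem hmm.2, ih]
        have hlt : (lexChoice π S p).card < S.card :=
          card_lt_card (Finset.ssubset_iff_of_subset (lexChoice_subset π S p) |>.2
            ⟨_, hmm.1, hmm.2⟩)
        rw [ih] at hlt
        omega
      · have hsub : S ⊆ lexChoice π S p := by
          rw [Finset.not_nonempty_iff_eq_empty, Finset.sdiff_eq_empty_iff_subset] at h
          exact h
        have heq : lexChoice π S p = S := subset_antisymm (lexChoice_subset π S p) hsub
        rw [heq] at ih ⊢
        omega

lemma lexChoice_erase (b : α) :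
    ∀ q, lexChoice π S q \ {b} ⊆ lexChoice π (S.erase b) q := by
  intro q
  induction q with
  | zero => simp [lexChoice]
  | succ p ih =>
      letI := π p
      intro x hx
      rw [mem_sdiff, mem_singleton] at hx
      obtain ⟨hx1, hxb⟩ := hx
      simp only [lexChoice] at hx1 ⊢
      set T := lexChoice π S p with hTdef
      set T' := lexChoice π (S.erase b) p with hT'def
      have hsubT' : ∀ y, y ∈ T → y ≠ b → y ∈ T' := by
        intro y hy hyb
        exact ih (by rw [mem_sdiff, mem_singleton]; exact ⟨hy, hyb⟩)
      by_cases h : (S \ T).Nonempty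
      · rw [dif_pos h] at hx1
        rcases mem_insert.1 hx1 with hxm | hxT
        · -- x is the max of S \ T
          subst hxm
          set x := @Finset.max' α (π p) (S \ T) h with hxdef
          by_cases hxT' : x ∈ T'
          · split_ifs with h2
            · exact mem_insert_of_mem hxT'
            · exact hxT'
          · have hxS : x ∈ S \ T := Finset.max'_mem _ h
            rw [mem_sdiff] at hxS
            have hxE : x ∈ S.erase b \ T' := by
              rw [mem_sdiff]
              exact ⟨mem_erase.2 ⟨hxb, hxS.1⟩, hxT'⟩
            have h2 : (S.erase b \ T').Nonempty := ⟨x, hxE⟩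
            rw [dif_pos h2]
            have hkey : @Finset.max' α (π p) (S.erase b \ T') h2 = x := by
              apply le_antisymm
              · apply Finset.max'_le
                intro y hy
                rw [mem_sdiff, mem_erase] at hy
                have hyT : y ∉ T := by
                  intro hyT
                  exact hy.2 (hsubT' y hyT hy.1.1)
                exact Finset.le_max' _ y (mem_sdiff.2 ⟨hy.1.2, hyT⟩)
              · exact Finset.le_max' _ x hxE
            rw [hkey]
            exact mem_insert_self _ _
        · have hx' := hsubT' x hxT hxb
          split_ifs with h2
          · exact mem_insert_of_mem hx'
          · exact hx'
      · rw [dif_neg h] at hx1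
        have := hsubT' x hx1 hxb
        split_ifs with h2
        · exact mem_insert_of_mem this
        · exact this

end Lex

/-! ### Forward direction -/

section Forward

variable {C : Finset α → ℕ → Finset α} {π : ℕ → LinearOrder α}

lemma isLexFor_capacityFilling (hl : IsLexFor C π) : CapacityFilling C := by
  intro S q hS h1 h2
  rw [hl S q hS h1 h2, lexChoice_card]

lemma isLexFor_monotone (hl : IsLexFor C π) : ChoiceMonotone C := by
  intro S q hS h1 h2
  rw [hl S q hS h1 (le_of_lt h2), hl S (q + 1) hS (by omega) (by omega)]
  exact lexChoice_mono π S q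

lemma isLexFor_grossSubstitutes (hl : IsLexFor C π) : GrossSubstitutes C := by
  intro S q a b hS h1 h2 haS hbS hab haC
  have hne : (S.erase b).Nonempty := ⟨a, mem_erase.2 ⟨hab, haS⟩⟩
  rw [hl S q hS h1 h2] at haC
  rw [hl (S.erase b) q hne h1 h2]
  exact lexChoice_erase π S b q (by rw [mem_sdiff, mem_singleton]; exact ⟨haC, hab⟩)

lemma isLexFor_revealed_lt (hl : IsLexFor C π) {q : ℕ} (h1 : 1 < q)
    (h2 : q ≤ Fintype.card α) {a b : α} (h : RevealedPref C q a b) :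
    (π (q - 1)).lt b a := by
  obtain ⟨p, rfl⟩ : ∃ p, q = p + 1 := ⟨q - 1, by omega⟩
  letI := π p
  obtain ⟨S, hS, haT, hbT, haC, hbR⟩ := h
  simp only [Nat.add_sub_cancel] at haT hbT ⊢
  rw [hl S p hS (by omega) (by omega)] at haT hbT
  rw [hl S (p + 1) hS (by omega) h2] at haC
  rw [Rej, hl S (p + 1) hS (by omega) h2, mem_sdiff] at hbR
  simp only [lexChoice] at haC hbR
  by_cases h : (S \ lexChoice π S p).Nonempty
  · rw [dif_pos h] at haC hbR
    rcases mem_insert.1 haC with hxm | hxT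
    · have hbin : b ∈ S \ lexChoice π S p := mem_sdiff.2 ⟨hbR.1, hbT⟩
      have hble := Finset.le_max' _ b hbin
      have hbne : b ≠ a := by
        intro e
        exact hbR.2 (e ▸ haC)
      rw [← hxm] at hble
      exact lt_of_le_of_ne hble hbne
    · exact absurd hxT haT
  · rw [dif_neg h] at haC
    exact absurd haC haT

lemma isLexFor_cwarp (hl : IsLexFor C π) : CWARP C := by
  intro q h1 h2 a b hab hba
  letI := π (q - 1)
  exact lt_asymm (isLexFor_revealed_lt hl h1 h2 hab) (isLexFor_revealed_lt hl h1 h2 hba)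

end Forward

/-! ### Converse direction -/

section Converse

variable {C : Finset α → ℕ → Finset α}

/-- Iterated gross substitutes: a chosen alternative remains chosen in subsets. -/
lemma gs_subset (hC : ValidRule C) (hGS : GrossSubstitutes C) {q : ℕ}
    (hq1 : 1 ≤ q) (hqn : q ≤ Fintype.card α) :
    ∀ (k : ℕ) (S T : Finset α), (S \ T).card ≤ k → T ⊆ S → ∀ a, a ∈ C S q → a ∈ T →
      a ∈ C T q := by
  intro k
  induction k with
  | zero =>
      intro S T hcard hTS a haC haT
      have hST : S ⊆ T := by
        rw [← Finset.sdiff_eq_empty_iff_subset, ← Finset.card_eq_zero]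
        omega
      rwa [subset_antisymm hTS hST]
  | succ k ih =>
      intro S T hcard hTS a haC haT
      by_cases hST : S ⊆ T
      · rwa [subset_antisymm hTS hST]
      · obtain ⟨b, hbS, hbT⟩ := Finset.not_subset.1 hST
        have hab : a ≠ b := fun e => hbT (e ▸ haT)
        have haS : a ∈ S := hTS haT
        have h1 : a ∈ C (S.erase b) q := hGS S q a b ⟨a, haS⟩ hq1 hqn haS hbS hab haC
        refine ih (S.erase b) T ?_ ?_ a h1 haT
        · have hsub : S.erase b \ T ⊆ (S \ T).erase b := by
            intro x hx
            rw [mem_sdiff, mem_erase] at hx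
            rw [mem_erase, mem_sdiff]
            exact ⟨hx.1.1, hx.1.2, hx.2⟩
          have := card_le_card hsub
          rw [card_erase_of_mem (mem_sdiff.2 ⟨hbS, hbT⟩)] at this
          omega
        · intro x hx
          exact mem_erase.2 ⟨fun e => hbT (e ▸ hx), hTS hx⟩

lemma gs_subset' (hC : ValidRule C) (hGS : GrossSubstitutes C) {q : ℕ}
    (hq1 : 1 ≤ q) (hqn : q ≤ Fintype.card α) {S T : Finset α} (hTS : T ⊆ S) {a : α}
    (haC : a ∈ C S q) (haT : a ∈ T) : a ∈ C T q :=
  gs_subset hC hGS hq1 hqn (S \ T).card S T le_rfl hTS a haC haT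

/-- Consistency: shrinking towards the chosen set does not change the choice. -/
lemma gs_consistency (hC : ValidRule C) (hCF : CapacityFilling C) (hGS : GrossSubstitutes C)
    {q : ℕ} (hq1 : 1 ≤ q) (hqn : q ≤ Fintype.card α) {S T : Finset α} (hS : S.Nonempty)
    (hCT : C S q ⊆ T) (hTS : T ⊆ S) : C T q = C S q := by
  have hCne : (C S q).Nonempty := by
    rw [← Finset.card_pos, hCF S q hS hq1 hqn]
    have := Finset.card_pos.2 hS
    omega
  have hTne : T.Nonempty := hCne.mono hCT
  have hsub : C S q ⊆ C T q := fun a ha => gs_subset' hC hGS hq1 hqn hTS ha (hCT ha)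
  refine (Finset.eq_of_subset_of_card_le hsub ?_).symm
  rw [hCF S q hS hq1 hqn, hCF T q hTne hq1 hqn]
  exact min_le_min (card_le_card hTS) le_rfl

/-- The auxiliary revealed-preference relation used to build the priority orders. -/
def Rq (C : Finset α → ℕ → Finset α) : ℕ → α → α → Prop
  | 0 => fun a b => a ≠ b ∧ a ∈ C {a, b} 1
  | (q + 1) => fun a b => q + 2 ≤ Fintype.card α ∧ RevealedPref C (q + 2) a b

lemma Rq_irrefl (hC : ValidRule C) : ∀ q a, ¬ Rq C q a a := by
  intro q a h
  cases q with
  | zero => exact h.1 rfl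
  | succ p =>
      obtain ⟨S, hS, h1, h2, h3, h4⟩ := h.2
      rw [Rej, mem_sdiff] at h4
      exact h4.2 h3

end Converse

section Converse2

variable {C : Finset α → ℕ → Finset α}

lemma Rq_trans (hC : ValidRule C) (hCF : CapacityFilling C) (hGS : GrossSubstitutes C)
    (hMono : ChoiceMonotone C) (hCW : CWARP C) :
    ∀ q a b c, Rq C q a b → Rq C q b c → Rq C q a c := by
  intro q a b c hab hbc
  have hn1 : 1 ≤ Fintype.card α := Fintype.card_pos_iff.2 ⟨a⟩
  cases q with
  | zero =>
      obtain ⟨hab', ha⟩ := hab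
      obtain ⟨hbc', hb⟩ := hbc
      have hcard : ∀ S : Finset α, S.Nonempty → (C S 1).card = 1 := by
        intro S hS
        rw [hCF S 1 hS le_rfl hn1]
        exact min_eq_right (Finset.card_pos.2 hS)
      have huniq : ∀ (S : Finset α), S.Nonempty → ∀ x y, x ∈ C S 1 → y ∈ C S 1 → x = y :=
        fun S hS x y hx hy => Finset.card_le_one.1 (le_of_eq (hcard S hS)) x hx y hy
      by_cases hac : a = c
      · subst hac
        have hpair : ({b, a} : Finset α) = {a, b} := Finset.pair_comm b a
        rw [hpair] at hb
        exact absurd (huniq {a, b} (insert_nonempty _ _) a b ha hb) hab'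
      · refine ⟨hac, ?_⟩
        set V : Finset α := {a, b, c} with hV
        have hVne : V.Nonempty := insert_nonempty _ _
        obtain ⟨m, hm⟩ := card_eq_one.1 (hcard V hVne)
        have hmC : m ∈ C V 1 := hm ▸ mem_singleton_self m
        have hmV : m ∈ V := (hC V 1 hVne le_rfl hn1).1 hmC
        have habV : ({a, b} : Finset α) ⊆ V := by
          intro x hx; simp only [hV, mem_insert, mem_singleton] at hx ⊢; tauto
        have hbcV : ({b, c} : Finset α) ⊆ V := by
          intro x hx; simp only [hV, mem_insert, mem_singleton] at hx ⊢; tauto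
        have hacV : ({a, c} : Finset α) ⊆ V := by
          intro x hx; simp only [hV, mem_insert, mem_singleton] at hx ⊢; tauto
        simp only [hV, mem_insert, mem_singleton] at hmV
        rcases hmV with rfl | rfl | rfl
        · -- m = a
          exact gs_subset' hC hGS le_rfl hn1 hacV hmC (by simp)
        · -- m = b
          have hb' : m ∈ C {a, m} 1 := gs_subset' hC hGS le_rfl hn1 habV hmC (by simp)
          exact absurd (huniq {a, m} (insert_nonempty _ _) a m ha hb') hab'
        · -- m = c
          have hc' : m ∈ C {b, m} 1 := gs_subset' hC hGS le_rfl hn1 hbcV hmC (by simp)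
          exact absurd (huniq {b, m} (insert_nonempty _ _) b m hb hc') hbc'
  | succ p =>
      obtain ⟨hn, hab'⟩ := hab
      obtain ⟨-, hbc'⟩ := hbc
      refine ⟨hn, ?_⟩
      obtain ⟨S₁, hS₁, haC1, hbC1, haC2, hbR⟩ := hab'
      obtain ⟨S₂, hS₂, hbC1', hcC1', hbC2, hcR⟩ := hbc'
      rw [Rej, mem_sdiff] at hbR hcR
      have haS₁ : a ∈ S₁ := (hC S₁ (p + 2) hS₁ (by omega) hn).1 haC2
      have hbS₂ : b ∈ S₂ := (hC S₂ (p + 2) hS₂ (by omega) hn).1 hbC2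
      have hab2 : a ≠ b := fun e => hbR.2 (e ▸ haC2)
      have hbc2 : b ≠ c := fun e => hcR.2 (e ▸ hbC2)
      by_cases hac : a = c
      · subst hac
        have h1 : RevealedPref C (p + 2) a b :=
          ⟨S₁, hS₁, haC1, hbC1, haC2, by rw [Rej, mem_sdiff]; exact hbR⟩
        have h2 : RevealedPref C (p + 2) b a :=
          ⟨S₂, hS₂, hbC1', hcC1', hbC2, by rw [Rej, mem_sdiff]; exact hcR⟩
        exact absurd h2 (hCW (p + 2) (by omega) hn a b h1)
      · set W : Finset α := S₁ ∪ S₂ with hWdef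
        have hWne : W.Nonempty := hS₁.mono Finset.subset_union_left
        have hp1n : p + 1 ≤ Fintype.card α := by omega
        have haW : a ∈ W := mem_union.2 (Or.inl haS₁)
        have hbW : b ∈ W := mem_union.2 (Or.inl hbR.1)
        have hcW : c ∈ W := mem_union.2 (Or.inr hcR.1)
        have hanCW : a ∉ C W (p + 1) := fun h =>
          haC1 (gs_subset' hC hGS (by omega) hp1n Finset.subset_union_left h haS₁)
        have hbnCW : b ∉ C W (p + 1) := fun h =>
          hbC1 (gs_subset' hC hGS (by omega) hp1n Finset.subset_union_left h hbR.1)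
        have hcnCW : c ∉ C W (p + 1) := fun h =>
          hcC1' (gs_subset' hC hGS (by omega) hp1n Finset.subset_union_right h hcR.1)
        set K := C W (p + 1) with hKdef
        have hKsub : K ⊆ W := (hC W (p + 1) hWne (by omega) hp1n).1
        have hWcard : p + 2 ≤ W.card := by
          have hlt : (C S₁ (p + 2)).card < S₁.card :=
            card_lt_card (Finset.ssubset_iff_of_subset (hC S₁ (p + 2) hS₁ (by omega) hn).1
              |>.2 ⟨b, hbR.1, hbR.2⟩)
          rw [hCF S₁ (p + 2) hS₁ (by omega) hn] at hlt
          have h2 := card_le_card (Finset.subset_union_left : S₁ ⊆ W)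
          have h3 : p + 2 ≤ S₁.card := by omega
          exact h3.trans h2
        have hKcard : K.card = p + 1 := by
          rw [hKdef, hCF W (p + 1) hWne (by omega) hp1n]
          exact min_eq_right (by omega)
        set V := K ∪ {a, b, c} with hVdef
        have habcV : ({a, b, c} : Finset α) ⊆ V := Finset.subset_union_right
        have hVW : V ⊆ W := union_subset hKsub (by
          intro x hx
          simp only [mem_insert, mem_singleton] at hx
          rcases hx with rfl | rfl | rfl
          exacts [haW, hbW, hcW])
        have hKV : K ⊆ V := Finset.subset_union_left
        have hVne : V.Nonempty := ⟨a, habcV (by simp)⟩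
        have hCV : C V (p + 1) = K := gs_consistency hC hCF hGS (by omega) hp1n hWne hKV hVW
        have hanCV : a ∉ C V (p + 1) := by rw [hCV]; exact hanCW
        have hbnCV : b ∉ C V (p + 1) := by rw [hCV]; exact hbnCW
        have hcnCV : c ∉ C V (p + 1) := by rw [hCV]; exact hcnCW
        have hVcard : p + 2 ≤ V.card := by
          have hins : insert a K ⊆ V := insert_subset (habcV (by simp)) hKV
          have h2 := card_le_card hins
          rw [card_insert_of_notMem hanCW] at h2
          omega
        have hmonoV : C V (p + 1) ⊆ C V (p + 2) := hMono V (p + 1) hVne (by omega) (by omega)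
        have hCV2card : (C V (p + 2)).card = p + 2 := by
          rw [hCF V (p + 2) hVne (by omega) hn]
          exact min_eq_right hVcard
        have hsd : (C V (p + 2) \ C V (p + 1)).card = 1 := by
          rw [card_sdiff_of_subset hmonoV, hCV2card, hCV, hKcard]
          omega
        obtain ⟨m, hm⟩ := card_eq_one.1 hsd
        have hmm := mem_sdiff.1 (hm ▸ mem_singleton_self m)
        have hunion : C V (p + 2) = insert m (C V (p + 1)) := by
          rw [← Finset.union_sdiff_of_subset hmonoV, hm, union_comm, ← Finset.insert_eq]
        have hmV : m ∈ V := (hC V (p + 2) hVne (by omega) hn).1 hmm.1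
        have hmabc : m = a ∨ m = b ∨ m = c := by
          rcases mem_union.1 hmV with h | h
          · rw [hCV] at hmm
            exact absurd h hmm.2
          · simpa using h
        have hRm : ∀ x, x ∈ ({a, b, c} : Finset α) → x ∉ C V (p + 1) → x ≠ m →
            RevealedPref C (p + 2) m x := by
          intro x hxV hxnC hxm
          exact ⟨V, hVne, hmm.2, hxnC, hmm.1, by
            rw [Rej, mem_sdiff]
            exact ⟨habcV hxV, by rw [hunion]; exact fun h => (mem_insert.1 h).elim hxm hxnC⟩⟩
        rcases hmabc with rfl | rfl | rfl
        · exact hRm c (by simp) hcnCV (fun e => hac e.symm)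
        · exact absurd (hRm a (by simp) hanCV (fun e => hab2 e))
            (hCW (p + 2) (by omega) hn a m
              ⟨S₁, hS₁, haC1, hbC1, haC2, by rw [Rej, mem_sdiff]; exact hbR⟩)
        · exact absurd (hRm b (by simp) hbnCV (fun e => hbc2 e))
            (hCW (p + 2) (by omega) hn b m
              ⟨S₂, hS₂, hbC1', hcC1', hbC2, by rw [Rej, mem_sdiff]; exact hcR⟩)

end Converse2

section Main

variable {C : Finset α → ℕ → Finset α}

lemma exists_pi (hC : ValidRule C) (hCF : CapacityFilling C) (hGS : GrossSubstitutes C)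
    (hMono : ChoiceMonotone C) (hCW : CWARP C) :
    ∃ π : ℕ → LinearOrder α, ∀ q a b, Rq C q a b → (π q).lt b a := by
  have h : ∀ q, ∃ L : LinearOrder α, ∀ a b, Rq C q a b → L.lt b a := by
    intro q
    obtain ⟨L, hL⟩ := exists_linext (fun a b => Rq C q b a)
      (fun a ha => Rq_irrefl hC q a ha)
      (fun a b c h h' => Rq_trans hC hCF hGS hMono hCW q c b a h' h)
    exact ⟨L, fun a b hab => hL b a hab⟩
  exact ⟨fun q => Classical.choose (h q), fun q => Classical.choose_spec (h q)⟩

lemma isLex_of_axioms (hC : ValidRule C) (hCF : CapacityFilling C) (hGS : GrossSubstitutes C)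
    (hMono : ChoiceMonotone C) (hCW : CWARP C) : IsLex C := by
  obtain ⟨π, hπ⟩ := exists_pi hC hCF hGS hMono hCW
  refine ⟨π, ?_⟩
  have main : ∀ q, 1 ≤ q → q ≤ Fintype.card α → ∀ S : Finset α, S.Nonempty →
      C S q = lexChoice π S q := by
    intro q
    induction q with
    | zero => omega
    | succ p ih =>
        intro _ hqn S hS
        have hn1 : 1 ≤ Fintype.card α := by omega
        rcases Nat.eq_zero_or_pos p with rfl | hp
        · -- capacity 1
          have hcard : (C S 1).card = 1 := by
            rw [hCF S 1 hS le_rfl hn1]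
            exact min_eq_right (Finset.card_pos.2 hS)
          obtain ⟨m, hm⟩ := card_eq_one.1 hcard
          have hmC : m ∈ C S 1 := hm ▸ mem_singleton_self m
          have hmS : m ∈ S := (hC S 1 hS le_rfl hn1).1 hmC
          have hmax : ∀ x ∈ S, x ≠ m → (π 0).lt x m := by
            intro x hx hxm
            apply hπ 0 m x
            refine ⟨fun e => hxm e.symm, ?_⟩
            refine gs_subset' hC hGS le_rfl hn1 ?_ hmC (by simp)
            intro y hy
            simp only [mem_insert, mem_singleton] at hy
            rcases hy with rfl | rfl
            exacts [hmS, hx]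
          simp only [lexChoice, Finset.sdiff_empty]
          rw [dif_pos hS, max'_eq_of_forall_lt (π 0) hS hmS hmax, hm]
          rfl
        · -- capacity p + 1, p ≥ 1
          have hT : C S p = lexChoice π S p := ih hp (by omega) S hS
          by_cases hcase : S.card ≤ p
          · have hCpcard : (C S p).card = S.card := by
              rw [hCF S p hS hp (by omega)]
              exact min_eq_left hcase
            have hCp : C S p = S :=
              Finset.eq_of_subset_of_card_le (hC S p hS hp (by omega)).1 hCpcard.ge
            have hmono := hMono S p hS hp (by omega)
            have hCp1 : C S (p + 1) = S :=
              subset_antisymm (hC S (p + 1) hS (by omega) hqn).1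
                (fun x hx => hmono (by rw [hCp]; exact hx))
            have hempty : ¬ (S \ lexChoice π S p).Nonempty := by
              rw [← hT, hCp]
              simp
            simp only [lexChoice]
            rw [dif_neg hempty, ← hT, hCp, hCp1]
          · push_neg at hcase
            have hmono := hMono S p hS hp (by omega)
            have hTcard : (C S p).card = p := by
              rw [hCF S p hS hp (by omega)]
              exact min_eq_right (by omega)
            have hC1card : (C S (p + 1)).card = p + 1 := by
              rw [hCF S (p + 1) hS (by omega) hqn]
              exact min_eq_right (by omega)
            have hsd : (C S (p + 1) \ C S p).card = 1 := by
              rw [card_sdiff_of_subset hmono, hC1card, hTcard]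
              omega
            obtain ⟨m, hm⟩ := card_eq_one.1 hsd
            have hmm := mem_sdiff.1 (hm ▸ mem_singleton_self m)
            have hunion : C S (p + 1) = insert m (C S p) := by
              rw [← Finset.union_sdiff_of_subset hmono, hm, union_comm, ← Finset.insert_eq]
            have hmS : m ∈ S := (hC S (p + 1) hS (by omega) hqn).1 hmm.1
            have hmSd : m ∈ S \ lexChoice π S p := by
              rw [← hT]
              exact mem_sdiff.2 ⟨hmS, hmm.2⟩
            have hSdne : (S \ lexChoice π S p).Nonempty := ⟨m, hmSd⟩
            have hlts : ∀ x ∈ S \ lexChoice π S p, x ≠ m → (π p).lt x m := by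
              intro x hx hxm
              rw [← hT, mem_sdiff] at hx
              apply hπ p m x
              obtain ⟨k, rfl⟩ : ∃ k, p = k + 1 := ⟨p - 1, by omega⟩
              refine ⟨hqn, S, hS, hmm.2, hx.2, hmm.1, ?_⟩
              rw [Rej, mem_sdiff]
              exact ⟨hx.1, by rw [hunion]; exact fun h => (mem_insert.1 h).elim hxm hx.2⟩
            simp only [lexChoice]
            rw [dif_pos hSdne, max'_eq_of_forall_lt (π p) hSdne hmSd hlts, ← hT, hunion]
  exact fun S q hS h1 h2 => main q h1 h2 S hS

end Main

theorem lex_iff_capacityFilling_grossSubstitutes_monotone_cwarp [Nonempty α]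
    (C : Finset α → ℕ → Finset α) (hC : ValidRule C) :
    IsLex C ↔
      (CapacityFilling C ∧ GrossSubstitutes C ∧ ChoiceMonotone C ∧ CWARP C) := by
  constructor
  · rintro ⟨π, hl⟩
    exact ⟨isLexFor_capacityFilling hl, isLexFor_grossSubstitutes hl,
      isLexFor_monotone hl, isLexFor_cwarp hl⟩
  · rintro ⟨hCF, hGS, hMono, hCW⟩
    exact isLex_of_axioms hC hCF hGS hMono hCW
end

section
/- Let C be lexicographic for the priority profile (≻₁,...,≻ₙ). Define A₁ = A and A_t = A \ C(A, t-1) for t ≥ 2. Then C is lexicographic for another priority profile (≻'₁,...,≻'ₙ) if and only if ≻₁ = ≻'₁ and for each t ∈ {1,...,n}, the restrictions of ≻_t and ≻'_t to A_t coincide. -/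
open Finset

variable {α : Type*} [Fintype α] [DecidableEq α]

/-- `A_t = A \ C(A, t-1)` for the lexicographic rule of `π`. -/
def lexA (π : ℕ → LinearOrder α) (t : ℕ) : Finset α :=
  Finset.univ \ lexChoice π Finset.univ (t - 1)

set_option linter.unusedSectionVars false

lemma lexChoice_succ (π : ℕ → LinearOrder α) (S : Finset α) (q : ℕ) :
    lexChoice π S (q + 1) =
      if h : (S \ lexChoice π S q).Nonempty then
        insert (@Finset.max' α (π q) (S \ lexChoice π S q) h) (lexChoice π S q)
      else lexChoice π S q := rfl

lemma lexChoice_subset_succ (π : ℕ → LinearOrder α) (S : Finset α) (q : ℕ) :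
    lexChoice π S q ⊆ lexChoice π S (q + 1) := by
  rw [lexChoice_succ]
  split_ifs with h
  · exact Finset.subset_insert _ _
  · exact Finset.Subset.refl _

/-- agreement of two linear orders on a set gives equal max'. -/
lemma max'_eq_of_agree (L L' : LinearOrder α) (s : Finset α) (h : s.Nonempty)
    (hag : ∀ a ∈ s, ∀ b ∈ s, L.le a b ↔ L'.le a b) :
    @Finset.max' α L s h = @Finset.max' α L' s h := by
  have hm : @Finset.max' α L s h ∈ s := @Finset.max'_mem α L s h
  have hm' : @Finset.max' α L' s h ∈ s := @Finset.max'_mem α L' s h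
  have h1 : L'.le (@Finset.max' α L s h) (@Finset.max' α L' s h) :=
    @Finset.le_max' α L' s _ hm
  have h2 : L.le (@Finset.max' α L' s h) (@Finset.max' α L s h) :=
    @Finset.le_max' α L s _ hm'
  exact @le_antisymm α L.toPartialOrder _ _ ((hag _ hm _ hm').mpr h1) h2

lemma le_iff_max'_pair (L : LinearOrder α) (a b : α) (h : ({b, a} : Finset α).Nonempty) :
    L.le a b ↔ @Finset.max' α L {b, a} h = b := by
  have hmem : @Finset.max' α L {b, a} h ∈ ({b, a} : Finset α) := @Finset.max'_mem α L _ h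
  have hb : b ∈ ({b, a} : Finset α) := Finset.mem_insert_self _ _
  have ha : a ∈ ({b, a} : Finset α) := Finset.mem_insert_of_mem (Finset.mem_singleton_self _)
  constructor
  · intro hab
    rcases Finset.mem_insert.1 hmem with hm | hm
    · exact hm
    · rw [Finset.mem_singleton] at hm
      have h1 : L.le b (@Finset.max' α L {b, a} h) := @Finset.le_max' α L _ _ hb
      rw [hm] at h1
      rw [hm]
      exact @le_antisymm α L.toPartialOrder _ _ hab h1
  · intro hm
    have h1 : L.le a (@Finset.max' α L {b, a} h) := @Finset.le_max' α L _ _ ha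
    rwa [hm] at h1

/-- if the full-universe choice is contained in `S`, the `S`-choice is the same -/
lemma lexChoice_univ_restrict (π : ℕ → LinearOrder α) (S : Finset α) :
    ∀ k, lexChoice π Finset.univ k ⊆ S → lexChoice π S k = lexChoice π Finset.univ k := by
  intro k
  induction k with
  | zero => intro _; rfl
  | succ k ih =>
    intro hsub
    have hsub' : lexChoice π Finset.univ k ⊆ S :=
      fun x hx => hsub (lexChoice_subset_succ π Finset.univ k hx)
    have ihq := ih hsub'
    by_cases hne : ((Finset.univ : Finset α) \ lexChoice π Finset.univ k).Nonempty
    · set p := @Finset.max' α (π k) _ hne with hp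
      have hpmem : p ∈ (Finset.univ : Finset α) \ lexChoice π Finset.univ k :=
        @Finset.max'_mem α (π k) _ hne
      have huniv : lexChoice π Finset.univ (k + 1) = insert p (lexChoice π Finset.univ k) := by
        rw [lexChoice_succ, dif_pos hne]
      have hpS : p ∈ S := hsub (by rw [huniv]; exact Finset.mem_insert_self _ _)
      have hpP : p ∉ lexChoice π Finset.univ k := (Finset.mem_sdiff.1 hpmem).2
      have hne' : (S \ lexChoice π S k).Nonempty :=
        ⟨p, Finset.mem_sdiff.2 ⟨hpS, by rw [ihq]; exact hpP⟩⟩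
      have hpSP : p ∈ S \ lexChoice π S k := Finset.mem_sdiff.2 ⟨hpS, by rw [ihq]; exact hpP⟩
      have hmax : @Finset.max' α (π k) (S \ lexChoice π S k) hne' = p := by
        set m := @Finset.max' α (π k) (S \ lexChoice π S k) hne' with hm
        have hmmem : m ∈ S \ lexChoice π S k := @Finset.max'_mem α (π k) _ hne'
        have hmP : m ∉ lexChoice π Finset.univ k := by
          rw [← ihq]; exact (Finset.mem_sdiff.1 hmmem).2
        have h1 : (π k).le m p :=
          @Finset.le_max' α (π k) _ _ (Finset.mem_sdiff.2 ⟨Finset.mem_univ _, hmP⟩)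
        have h2 : (π k).le p m := @Finset.le_max' α (π k) _ _ hpSP
        exact @le_antisymm α (π k).toPartialOrder _ _ h1 h2
      rw [lexChoice_succ, dif_pos hne', huniv, hmax, ihq]
    · have hne' : ¬ (S \ lexChoice π S k).Nonempty := by
        rw [ihq]
        intro ⟨x, hx⟩
        exact hne ⟨x, Finset.mem_sdiff.2 ⟨Finset.mem_univ _, (Finset.mem_sdiff.1 hx).2⟩⟩
      rw [lexChoice_succ, dif_neg hne', lexChoice_succ, dif_neg hne, ihq]

/-- substitutes-type property: chosen from univ and present in S ⇒ chosen from S -/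
lemma lexChoice_univ_inter (π : ℕ → LinearOrder α) (S : Finset α) :
    ∀ q, ∀ x, x ∈ lexChoice π Finset.univ q → x ∈ S → x ∈ lexChoice π S q := by
  intro q
  induction q with
  | zero => intro x hx _; exact absurd hx (Finset.notMem_empty x)
  | succ q ih =>
    intro x hx hxS
    by_cases hne : ((Finset.univ : Finset α) \ lexChoice π Finset.univ q).Nonempty
    · rw [lexChoice_succ, dif_pos hne] at hx
      rcases Finset.mem_insert.1 hx with hx | hx
      · -- x is the newly chosen max
        by_cases hxQ : x ∈ lexChoice π S q
        · exact lexChoice_subset_succ π S q hxQ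
        · have hne' : (S \ lexChoice π S q).Nonempty := ⟨x, Finset.mem_sdiff.2 ⟨hxS, hxQ⟩⟩
          rw [lexChoice_succ, dif_pos hne']
          set m := @Finset.max' α (π q) (S \ lexChoice π S q) hne' with hm
          have hmmem : m ∈ S \ lexChoice π S q := @Finset.max'_mem α (π q) _ hne'
          have hmP : m ∉ lexChoice π Finset.univ q := by
            intro hmem
            exact (Finset.mem_sdiff.1 hmmem).2 (ih m hmem (Finset.mem_sdiff.1 hmmem).1)
          have h1 : (π q).le x m :=
            @Finset.le_max' α (π q) _ _ (Finset.mem_sdiff.2 ⟨hxS, hxQ⟩)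
          have h2 : (π q).le m x := by
            rw [hx]
            exact @Finset.le_max' α (π q) _ _ (Finset.mem_sdiff.2 ⟨Finset.mem_univ _, hmP⟩)
          have : x = m := @le_antisymm α (π q).toPartialOrder _ _ h1 h2
          rw [this]
          exact Finset.mem_insert_self _ _
      · exact lexChoice_subset_succ π S q (ih x hx hxS)
    · rw [lexChoice_succ, dif_neg hne] at hx
      exact lexChoice_subset_succ π S q (ih x hx hxS)

lemma lexChoice_eq_of_agree (π π' : ℕ → LinearOrder α)
    (h : ∀ t : ℕ, 1 ≤ t → t ≤ Fintype.card α → ∀ a b : α,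
      a ∈ lexA π t → b ∈ lexA π t → ((π (t - 1)).le a b ↔ (π' (t - 1)).le a b))
    (S : Finset α) : ∀ q, q ≤ Fintype.card α → lexChoice π S q = lexChoice π' S q := by
  intro q
  induction q with
  | zero => intro _; rfl
  | succ q ih =>
    intro hq
    have ihe := ih (by omega)
    rw [lexChoice_succ, lexChoice_succ, ← ihe]
    by_cases hne : (S \ lexChoice π S q).Nonempty
    · rw [dif_pos hne, dif_pos hne]
      congr 1
      apply max'_eq_of_agree
      intro a ha b hb
      have key : ∀ x ∈ S \ lexChoice π S q, x ∈ lexA π (q + 1) := by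
        intro x hx
        rw [lexA, Nat.add_sub_cancel, Finset.mem_sdiff]
        exact ⟨Finset.mem_univ x, fun hxu =>
          (Finset.mem_sdiff.1 hx).2 (lexChoice_univ_inter π S q x hxu (Finset.mem_sdiff.1 hx).1)⟩
      have := h (q + 1) (by omega) hq a b (key a ha) (key b hb)
      simpa using this
    · rw [dif_neg hne, dif_neg hne]

theorem lex_profile_characterization [Nonempty α]
    (C : Finset α → ℕ → Finset α) (π π' : ℕ → LinearOrder α)
    (hC : IsLexFor C π) :
    IsLexFor C π' ↔
      ((∀ a b : α, (π 0).le a b ↔ (π' 0).le a b) ∧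
        ∀ t : ℕ, 1 ≤ t → t ≤ Fintype.card α → ∀ a b : α,
          a ∈ lexA π t → b ∈ lexA π t →
            ((π (t - 1)).le a b ↔ (π' (t - 1)).le a b)) := by
  have hcard : 1 ≤ Fintype.card α := Fintype.card_pos
  constructor
  · intro hC'
    have key : ∀ t : ℕ, 1 ≤ t → t ≤ Fintype.card α → ∀ a b : α,
        a ∈ lexA π t → b ∈ lexA π t →
          ((π (t - 1)).le a b ↔ (π' (t - 1)).le a b) := by
      intro t ht1 htc a b ha hb
      obtain ⟨u, rfl⟩ : ∃ u, t = u + 1 := ⟨t - 1, by omega⟩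
      rw [Nat.add_sub_cancel] at *
      rw [lexA, Nat.add_sub_cancel, Finset.mem_sdiff] at ha hb
      set P := lexChoice π Finset.univ u with hPdef
      have haP : a ∉ P := ha.2
      have hbP : b ∉ P := hb.2
      set S := insert b (insert a P) with hSdef
      have hSne : S.Nonempty := ⟨b, Finset.mem_insert_self _ _⟩
      have hPS : P ⊆ S := fun x hx =>
        Finset.mem_insert_of_mem (Finset.mem_insert_of_mem hx)
      have hQ : lexChoice π S u = P := lexChoice_univ_restrict π S u hPS
      have hQ' : lexChoice π' S u = P := by
        rcases Nat.eq_zero_or_pos u with h0 | h1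
        · subst h0; rfl
        · rw [← hC' S u hSne h1 (by omega), hC S u hSne h1 (by omega), hQ]
      have hSP : S \ P = {b, a} := by
        ext x
        simp only [hSdef, Finset.mem_sdiff, Finset.mem_insert, Finset.mem_singleton]
        constructor
        · rintro ⟨hx | hx | hx, hxP⟩
          · exact Or.inl hx
          · exact Or.inr hx
          · exact absurd hx hxP
        · rintro (rfl | rfl)
          · exact ⟨Or.inl rfl, hbP⟩
          · exact ⟨Or.inr (Or.inl rfl), haP⟩
      have hpairne : ({b, a} : Finset α).Nonempty := ⟨b, Finset.mem_insert_self _ _⟩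
      have e1 : lexChoice π S (u + 1) = insert (@Finset.max' α (π u) {b, a} hpairne) P := by
        rw [lexChoice_succ]
        rw [dif_pos (by rw [hQ, hSP]; exact hpairne)]
        simp only [hQ, hSP]
      have e2 : lexChoice π' S (u + 1) = insert (@Finset.max' α (π' u) {b, a} hpairne) P := by
        rw [lexChoice_succ]
        rw [dif_pos (by rw [hQ', hSP]; exact hpairne)]
        simp only [hQ', hSP]
      have eC : lexChoice π S (u + 1) = lexChoice π' S (u + 1) := by
        rw [← hC S (u + 1) hSne (by omega) htc, ← hC' S (u + 1) hSne (by omega) htc]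
      rw [e1, e2] at eC
      set x := @Finset.max' α (π u) {b, a} hpairne with hx
      set y := @Finset.max' α (π' u) {b, a} hpairne with hy
      have hxmem : x ∈ ({b, a} : Finset α) := @Finset.max'_mem α (π u) _ hpairne
      have hymem : y ∈ ({b, a} : Finset α) := @Finset.max'_mem α (π' u) _ hpairne
      have hxnP : x ∉ P := by
        rcases Finset.mem_insert.1 hxmem with h | h
        · rw [h]; exact hbP
        · rw [Finset.mem_singleton] at h; rw [h]; exact haP
      have hxy : x = y := by
        have : x ∈ insert y P := by rw [← eC]; exact Finset.mem_insert_self _ _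
        rcases Finset.mem_insert.1 this with h | h
        · exact h
        · exact absurd h hxnP
      rw [le_iff_max'_pair (π u) a b hpairne, le_iff_max'_pair (π' u) a b hpairne,
        ← hx, ← hy, hxy]
    refine ⟨fun a b => ?_, key⟩
    have := key 1 le_rfl hcard a b ?_ ?_
    · simpa using this
    · rw [lexA]; simp [lexChoice]
    · rw [lexA]; simp [lexChoice]
  · rintro ⟨_, h2⟩
    intro S q hSne hq1 hqc
    rw [hC S q hSne hq1 hqc]
    exact lexChoice_eq_of_agree π π' h2 S q hqc
end
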